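/- arXiv:1112.5305 — 5 statements merged into one kernel-verified Lean document; each statement's English description precedes it below -/
import Mathlib

section
/- Let b : (0,∞) → ℝ be a bounded function. For n, i ∈ ℕ define the landmark point t_n^i = inf{ t ∈ [i/2^n, (i+1)/2^n] : b*(t) ≥ sup_{[i/2^n,(i+1)/2^n]} b }, where b* is the upper-semi-continuous envelope of b. Then b*(t_n^i) ≥ b*(s) for every s ∈ [i/2^n, (i+1)/2^n). -/
/-!
The envelope `b*` is upper semicontinuous on `[0, ∞)`, so on a compact interval `[a, c]` it
attains its maximum, which dominates `sup_{[a,c]} b`, and its superlevel set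
`{t ∈ [a, c] | sup_{[a,c]} b ≤ b* t}` is a nonempty compact set containing its infimum `T`.
At interior points `s` of `[a, c]` the envelope only sees values of `b` on `[a, c]`, so
`b* s ≤ sup_{[a,c]} b ≤ b* T`; at `s = a` either the same bound holds or `a` itself lies in
the superlevel set, and then `T = a`.
-/

open Filter Set Topology

/-- The upper-semi-continuous envelope of `b` on `(0,∞)`:
`b*(t) = max (b t) (limsup_{s→t, s∈(0,∞)} b s)`. -/
noncomputable def bstarEnv (b : ℝ → ℝ) (t : ℝ) : ℝ :=
  max (b t) (Filter.limsup b (nhdsWithin t ({t}ᶜ ∩ Set.Ioi 0)))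

/-- The landmark point `t_n^i = inf { t ∈ [i/2^n,(i+1)/2^n] : b*(t) ≥ sup_{[i/2^n,(i+1)/2^n]} b }`. -/
noncomputable def landmark (b : ℝ → ℝ) (n i : ℕ) : ℝ :=
  sInf {t ∈ Set.Icc ((i : ℝ) / 2 ^ n) (((i : ℝ) + 1) / 2 ^ n) |
    sSup (b '' Set.Icc ((i : ℝ) / 2 ^ n) (((i : ℝ) + 1) / 2 ^ n)) ≤ bstarEnv b t}

noncomputable def landmarkSet (b : ℝ → ℝ) (a c : ℝ) : Set ℝ :=
  {t ∈ Icc a c | sSup (b '' Icc a c) ≤ bstarEnv b t}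

section Envelope

variable {b : ℝ → ℝ} {M : ℝ}

lemma neBot_nhdsWithin_compl_singleton_inter_Ioi_zero {t : ℝ} (ht : 0 ≤ t) :
    (𝓝[{t}ᶜ ∩ Ioi 0] t).NeBot :=
  (nhdsGT_neBot t).mono (nhdsWithin_mono t fun _ hx => ⟨ne_of_gt hx, ht.trans_lt hx⟩)

lemma nhdsWithin_Ici_zero_le {t : ℝ} (ht : 0 ≤ t) :
    𝓝[Ici 0] t ≤ pure t ⊔ 𝓝[{t}ᶜ ∩ Ioi 0] t := by
  have hsub : ∀ x, 0 < x → x ∈ insert t ({t}ᶜ ∩ Ioi 0) := fun x hx =>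
    (eq_or_ne x t).imp id fun hxt => ⟨hxt, hx⟩
  rw [← nhdsWithin_insert]
  apply nhdsWithin_le_of_mem
  rcases ht.eq_or_lt with rfl | ht
  · exact mem_of_superset self_mem_nhdsWithin fun x hx =>
      hx.eq_or_lt.elim (fun h => Or.inl h.symm) (hsub x)
  · exact mem_nhdsWithin_of_mem_nhds (mem_of_superset (Ioi_mem_nhds ht) hsub)

theorem upperSemicontinuousOn_bstarEnv (hb : ∀ t, |b t| ≤ M) :
    UpperSemicontinuousOn (bstarEnv b) (Ici 0) := by
  intro t ht r hr
  obtain ⟨-, hlim⟩ := max_lt_iff.mp hr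
  obtain ⟨r', hlim', hr'⟩ := exists_between hlim
  have hnear : ∀ᶠ y in 𝓝[{t}ᶜ ∩ Ioi 0] t, b y < r' :=
    eventually_lt_of_limsup_lt hlim' (isBoundedUnder_of ⟨M, fun x => (abs_le.1 (hb x)).2⟩)
  have hpunct : ∀ᶠ y in 𝓝[{t}ᶜ ∩ Ioi 0] t, bstarEnv b y < r := by
    filter_upwards [eventually_eventually_nhdsWithin.2 hnear, self_mem_nhdsWithin]
      with y hy ⟨hyt, hy0⟩
    have hle : 𝓝[{y}ᶜ ∩ Ioi 0] y ≤ 𝓝[{t}ᶜ ∩ Ioi 0] y :=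
      (nhdsWithin_mono y inter_subset_right).trans (nhdsWithin_inter_of_mem
        (mem_nhdsWithin_of_mem_nhds (isOpen_compl_singleton.mem_nhds hyt))).ge
    have := neBot_nhdsWithin_compl_singleton_inter_Ioi_zero hy0.le
    refine max_lt ((hy.self_of_nhdsWithin ⟨hyt, hy0⟩).trans hr') ?_
    refine (limsup_le_of_le ?_ (Eventually.mono (hle hy) fun _ => le_of_lt)).trans_lt hr'
    exact isCoboundedUnder_le_of_le _ fun x => (abs_le.1 (hb x)).1
  exact nhdsWithin_Ici_zero_le ht (eventually_sup.2 ⟨hr, hpunct⟩)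

variable {a c : ℝ}

lemma upperSemicontinuousOn_bstarEnv_Icc (hb : ∀ t, |b t| ≤ M) (ha : 0 ≤ a) :
    UpperSemicontinuousOn (bstarEnv b) (Icc a c) :=
  (upperSemicontinuousOn_bstarEnv hb).mono (Icc_subset_Ici_self.trans (Ici_subset_Ici.2 ha))

lemma bstarEnv_le_sSup_image_Icc (hb : ∀ t, |b t| ≤ M) {s : ℝ} (ha : 0 ≤ a)
    (hs : s ∈ Ioo a c) : bstarEnv b s ≤ sSup (b '' Icc a c) := by
  have hbdd : BddAbove (b '' Icc a c) :=
    ⟨M, by rintro _ ⟨x, -, rfl⟩; exact (abs_le.1 (hb x)).2⟩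
  have hIcc : ∀ x ∈ Ioo a c, b x ≤ sSup (b '' Icc a c) := fun x hx =>
    le_csSup hbdd (mem_image_of_mem b (Ioo_subset_Icc_self hx))
  have := neBot_nhdsWithin_compl_singleton_inter_Ioi_zero (ha.trans hs.1.le)
  refine max_le (hIcc s hs) (limsup_le_of_le ?_ ?_)
  · exact isCoboundedUnder_le_of_le _ fun x => (abs_le.1 (hb x)).1
  · exact Eventually.mono (nhdsWithin_le_nhds (Ioo_mem_nhds hs.1 hs.2)) hIcc

lemma landmarkSet_nonempty (hb : ∀ t, |b t| ≤ M) (ha : 0 ≤ a) (hac : a ≤ c) :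
    (landmarkSet b a c).Nonempty := by
  obtain ⟨t, ht, hmax⟩ :=
    (upperSemicontinuousOn_bstarEnv_Icc hb ha).exists_isMaxOn (nonempty_Icc.2 hac) isCompact_Icc
  refine ⟨t, ht, csSup_le ((nonempty_Icc.2 hac).image b) ?_⟩
  rintro _ ⟨x, hx, rfl⟩
  exact (le_max_left _ _).trans (hmax hx)

lemma isCompact_landmarkSet (hb : ∀ t, |b t| ≤ M) (ha : 0 ≤ a) :
    IsCompact (landmarkSet b a c) :=
  (upperSemicontinuousOn_bstarEnv_Icc hb ha).isCompact_inter_preimage_Ici isCompact_Icc _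

lemma sInf_mem_landmarkSet (hb : ∀ t, |b t| ≤ M) (ha : 0 ≤ a) (hac : a ≤ c) :
    sInf (landmarkSet b a c) ∈ landmarkSet b a c :=
  (isCompact_landmarkSet hb ha).sInf_mem (landmarkSet_nonempty hb ha hac)

theorem bstarEnv_le_bstarEnv_sInf_landmarkSet (hb : ∀ t, |b t| ≤ M) (ha : 0 ≤ a) {s : ℝ}
    (hs : s ∈ Ico a c) : bstarEnv b s ≤ bstarEnv b (sInf (landmarkSet b a c)) := by
  have hac : a ≤ c := hs.1.trans hs.2.le
  obtain ⟨-, hT⟩ := sInf_mem_landmarkSet hb ha hac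
  rcases hs.1.eq_or_lt with rfl | has
  · by_cases hsS : sSup (b '' Icc a c) ≤ bstarEnv b a
    · have hleast : IsLeast (landmarkSet b a c) a :=
        ⟨⟨left_mem_Icc.2 hac, hsS⟩, fun t ht => ht.1.1⟩
      rw [hleast.csInf_eq]
    · exact (not_le.1 hsS).le.trans hT
  · exact (bstarEnv_le_sSup_image_Icc hb ha ⟨has, hs.2⟩).trans hT

end Envelope

/-- for bounded `b`, `b*(t_n^i) ≥ b*(s)` for every
`s ∈ [i/2^n, (i+1)/2^n)`. -/
theorem stmt2 (b : ℝ → ℝ) (M : ℝ) (hb : ∀ t : ℝ, |b t| ≤ M) (n i : ℕ) :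
    ∀ s ∈ Set.Ico ((i : ℝ) / 2 ^ n) (((i : ℝ) + 1) / 2 ^ n),
      bstarEnv b s ≤ bstarEnv b (landmark b n i) :=
  fun _ hs => bstarEnv_le_bstarEnv_sInf_landmarkSet hb (by positivity) hs
end

section
/- Let X be a stochastic process with continuous sample paths, b : (0,∞) → ℝ bounded, b* its upper-semi-continuous envelope, and LM(b) = ∪_n LM_n(b) its set of landmark points. Then for every t > 0, the event {X_s ≥ b(s) for all s ∈ (0,t)} equals the event {X_s ≥ b*(s) for all s ∈ (0,t) ∩ LM(b)}. -/
open Filter Set Topology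

/-!
If `X ≥ b` on `(0,t)`, continuity of `X` upgrades this to `X ≥ b*`, since `b*` only adds
limit superiors of `b`. Conversely, each landmark point `t_n^i` lies in its dyadic interval and
`b*(t_n^i) ≥ sup b` there; the landmarks of the dyadic intervals containing `s` converge to `s`,
so `b s ≤ b*(t_n^i) ≤ X(t_n^i) → X s`.
-/

section Envelope

variable {b : ℝ → ℝ} {m : ℝ}

lemma bstarEnv_of_pos (hm : 0 < m) :
    bstarEnv b m = max (b m) (limsup b (𝓝[≠] m)) := by
  rw [bstarEnv, nhdsWithin_inter_of_mem' (mem_nhdsWithin_of_mem_nhds (Ioi_mem_nhds hm))]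

lemma bstarEnv_le_of_eventually_le (hbB : BddBelow (range b)) (hm : 0 < m) {f : ℝ → ℝ}
    (hf : ContinuousAt f m) (hbf : ∀ᶠ x in 𝓝 m, b x ≤ f x) : bstarEnv b m ≤ f m := by
  rw [bstarEnv_of_pos hm]
  have hf' : Tendsto f (𝓝[≠] m) (𝓝 (f m)) := hf.tendsto.mono_left nhdsWithin_le_nhds
  refine max_le hbf.self_of_nhds ?_
  calc limsup b (𝓝[≠] m)
      ≤ limsup f (𝓝[≠] m) :=
        limsup_le_limsup (nhdsWithin_le_nhds hbf)
          hbB.isBoundedUnder_of_range.isCoboundedUnder_le hf'.isBoundedUnder_le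
    _ = f m := hf'.limsup_eq

/-- On `(0,∞)`, `b*` is the limit superior of `b` along the full neighbourhood filter. -/
lemma le_bstarEnv_iff_forall_mem_closure (hbA : BddAbove (range b)) (hbB : BddBelow (range b))
    (hm : 0 < m) {c : ℝ} :
    c ≤ bstarEnv b m ↔ ∀ c' < c, m ∈ closure {x | c' < b x} := by
  simp only [mem_closure_iff_frequently, mem_ofPred_eq, ← nhdsNE_sup_pure, frequently_sup,
    frequently_pure, bstarEnv_of_pos hm]
  constructor
  · intro hc c' hc'
    rcases lt_max_iff.mp (hc'.trans_le hc) with hbm | hlim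
    · exact Or.inr hbm
    · exact Or.inl (frequently_lt_of_lt_limsup
        hbB.isBoundedUnder_of_range.isCoboundedUnder_le hlim)
  · intro h
    by_contra! hc
    obtain ⟨c', hlt, hc'⟩ := exists_between hc
    rcases h c' hc' with hfreq | hbm
    · have hev := eventually_lt_of_limsup_lt ((le_max_right _ _).trans_lt hlt)
        hbA.isBoundedUnder_of_range
      exact hfreq (hev.mono fun x hx => hx.not_gt)
    · exact hbm.not_gt ((le_max_left _ _).trans_lt hlt)

end Envelope

section Landmark

variable {b : ℝ → ℝ}

/-- On a compact interval inside `(0,∞)` the set where `b*` reaches `sup b` is closed and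
nonempty: it is the intersection of the nested compact sets `[a, c] ∩ closure {b > c'}`,
`c' < sup b`. -/
lemma csInf_mem_setOf_sSup_le_bstarEnv (hbA : BddAbove (range b)) (hbB : BddBelow (range b))
    {a c : ℝ} (ha : 0 < a) (hac : a ≤ c) :
    sInf {u ∈ Icc a c | sSup (b '' Icc a c) ≤ bstarEnv b u}
      ∈ {u ∈ Icc a c | sSup (b '' Icc a c) ≤ bstarEnv b u} := by
  set d := sSup (b '' Icc a c)
  set K : Iio d → Set ℝ := fun c' => Icc a c ∩ closure {x | (c' : ℝ) < b x}
  have hd : Nonempty (Iio d) := ⟨⟨d - 1, by simp⟩⟩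
  have hS : {u ∈ Icc a c | d ≤ bstarEnv b u} = ⋂ c', K c' := by
    ext u
    simp only [mem_iInter, K, mem_inter_iff, mem_ofPred_eq, Subtype.forall, mem_Iio]
    constructor
    · rintro ⟨hu, hdu⟩ c' hc'
      exact ⟨hu, (le_bstarEnv_iff_forall_mem_closure hbA hbB (ha.trans_le hu.1)).mp hdu c' hc'⟩
    · intro h
      have hu := (h (d - 1) (by linarith)).1
      exact ⟨hu, (le_bstarEnv_iff_forall_mem_closure hbA hbB (ha.trans_le hu.1)).mpr
        fun c' hc' => (h c' hc').2⟩
  have hK_closed : ∀ c', IsClosed (K c') := fun _ => isClosed_Icc.inter isClosed_closure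
  have hK_nonempty : ∀ c' : Iio d, (K c').Nonempty := by
    rintro ⟨c', hc'⟩
    obtain ⟨_, ⟨x, hx, rfl⟩, hbx⟩ := exists_lt_of_lt_csSup
      ((nonempty_Icc.mpr hac).image b) hc'
    exact ⟨x, hx, subset_closure hbx⟩
  have hK_antitone : Antitone K := fun c₁ c₂ h12 =>
    inter_subset_inter_right _ (closure_mono fun _ hx => (Subtype.coe_le_coe.mpr h12).trans_lt hx)
  rw [hS]
  exact (isClosed_iInter hK_closed).csInf_mem
    (IsCompact.nonempty_iInter_of_directed_nonempty_isCompact_isClosed K hK_antitone.directed_ge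
      hK_nonempty (fun _ => isCompact_Icc.inter_right isClosed_closure) hK_closed)
    ⟨a, fun _ hu => (mem_iInter.mp hu ⟨d - 1, by simp⟩).1.1⟩

lemma landmark_mem (hbA : BddAbove (range b)) (hbB : BddBelow (range b)) {n i : ℕ} (hi : 0 < i) :
    landmark b n i ∈ Icc ((i : ℝ) / 2 ^ n) (((i : ℝ) + 1) / 2 ^ n) ∧
      sSup (b '' Icc ((i : ℝ) / 2 ^ n) (((i : ℝ) + 1) / 2 ^ n)) ≤ bstarEnv b (landmark b n i) :=
  csInf_mem_setOf_sSup_le_bstarEnv hbA hbB (by positivity) (by gcongr; linarith)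

lemma div_two_pow_floor_bounds {s : ℝ} (hs : 0 ≤ s) (n : ℕ) :
    (⌊2 ^ n * s⌋₊ : ℝ) / 2 ^ n ≤ s ∧ s < ((⌊2 ^ n * s⌋₊ : ℝ) + 1) / 2 ^ n := by
  have h2n : (0 : ℝ) < 2 ^ n := by positivity
  rw [div_le_iff₀ h2n, lt_div_iff₀ h2n, mul_comm s]
  exact ⟨Nat.floor_le (by positivity), Nat.lt_floor_add_one _⟩

lemma exists_landmark_tendsto (hbA : BddAbove (range b)) (hbB : BddBelow (range b)) {s : ℝ}
    (hs : 0 < s) :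
    ∃ i : ℕ → ℕ, Tendsto (fun n => landmark b n (i n)) atTop (𝓝 s) ∧
      ∀ᶠ n in atTop, b s ≤ bstarEnv b (landmark b n (i n)) := by
  have hr : Tendsto (fun n : ℕ => ((1 : ℝ) / 2) ^ n) atTop (𝓝 0) :=
    tendsto_pow_atTop_nhds_zero_of_lt_one (by norm_num) (by norm_num)
  have hpos : ∀ᶠ n in atTop, 0 < ⌊2 ^ n * s⌋₊ := by
    filter_upwards [hr.eventually (gt_mem_nhds hs)] with n hn
    rw [Nat.floor_pos, ← div_le_iff₀' (by positivity), ← one_div_pow]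
    exact hn.le
  have hclose : ∀ᶠ n in atTop, |landmark b n ⌊2 ^ n * s⌋₊ - s| ≤ (1 / 2) ^ n := by
    filter_upwards [hpos] with n hn
    obtain ⟨⟨hlo, hhi⟩, -⟩ := landmark_mem (n := n) hbA hbB hn
    obtain ⟨hs_lo, hs_hi⟩ := div_two_pow_floor_bounds hs.le n
    rw [abs_le, one_div_pow]
    constructor <;> linarith [add_div (⌊2 ^ n * s⌋₊ : ℝ) 1 (2 ^ n)]
  refine ⟨fun n => ⌊2 ^ n * s⌋₊, ?_, ?_⟩
  · have hlo : Tendsto (fun n : ℕ => s - (1 / 2) ^ n) atTop (𝓝 s) := by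
      simpa using tendsto_const_nhds.sub hr
    have hhi : Tendsto (fun n : ℕ => s + (1 / 2) ^ n) atTop (𝓝 s) := by
      simpa using tendsto_const_nhds.add hr
    refine tendsto_of_tendsto_of_tendsto_of_le_of_le' hlo hhi ?_ ?_ <;>
      filter_upwards [hclose] with n hn <;> linarith [abs_le.mp hn]
  · filter_upwards [hpos] with n hn
    obtain ⟨-, hsup⟩ := landmark_mem (n := n) hbA hbB hn
    refine le_trans (le_csSup (hbA.mono (image_subset_range _ _)) ?_) hsup
    exact mem_image_of_mem b ⟨(div_two_pow_floor_bounds hs.le n).1,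
      (div_two_pow_floor_bounds hs.le n).2.le⟩

end Landmark

theorem stmt5_general {Ω : Type*} (X : ℝ → Ω → ℝ)
    (hX : ∀ ω : Ω, Continuous fun s : ℝ => X s ω)
    (b : ℝ → ℝ) (M : ℝ) (hb : ∀ t : ℝ, |b t| ≤ M)
    (t : ℝ) :
    {ω : Ω | ∀ s ∈ Set.Ioo (0 : ℝ) t, b s ≤ X s ω}
      = {ω : Ω | ∀ s ∈ Set.Ioo (0 : ℝ) t,
          (∃ n i : ℕ, s = landmark b n i) → bstarEnv b s ≤ X s ω} := by
  have hbA : BddAbove (range b) := ⟨M, by rintro _ ⟨x, rfl⟩; exact (abs_le.mp (hb x)).2⟩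
  have hbB : BddBelow (range b) := ⟨-M, by rintro _ ⟨x, rfl⟩; exact (abs_le.mp (hb x)).1⟩
  ext ω
  constructor
  · intro h s hs _
    exact bstarEnv_le_of_eventually_le hbB hs.1 (hX ω).continuousAt
      (eventually_of_mem (isOpen_Ioo.mem_nhds hs) h)
  · intro h s hs
    obtain ⟨i, hlim, hle⟩ := exists_landmark_tendsto hbA hbB hs.1
    refine ge_of_tendsto (((hX ω).tendsto s).comp hlim) ?_
    filter_upwards [hle, hlim (isOpen_Ioo.mem_nhds hs)] with n hbs hmem
    exact hbs.trans (h _ hmem ⟨n, i n, rfl⟩)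

/-- for a process `X` with continuous sample paths and bounded `b`,
the event `{X_s ≥ b(s) ∀ s ∈ (0,t)}` equals the event
`{X_s ≥ b*(s) ∀ s ∈ (0,t) ∩ LM(b)}`, where `LM(b) = {t_n^i : n, i ∈ ℕ}`. -/
theorem stmt5 {Ω : Type*} (X : ℝ → Ω → ℝ)
    (hX : ∀ ω : Ω, Continuous fun s : ℝ => X s ω)
    (b : ℝ → ℝ) (M : ℝ) (hb : ∀ t : ℝ, |b t| ≤ M)
    (t : ℝ) (ht : 0 < t) :
    {ω : Ω | ∀ s ∈ Set.Ioo (0 : ℝ) t, b s ≤ X s ω}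
      = {ω : Ω | ∀ s ∈ Set.Ioo (0 : ℝ) t,
          (∃ n i : ℕ, s = landmark b n i) → bstarEnv b s ≤ X s ω} :=
  stmt5_general X hX b M hb t
end

section
/- Let X have continuous sample paths, b : (0,∞) → ℝ be any function, b*(t) = max(b(t), limsup_{s→t} b(s)), b*_-(t) = limsup_{s↗t} b(s), τ = inf{s>0 : X_s < b(s)}, τ̂ = inf{s>0 : X_s ≤ b(s)}. Then for all t > 0: {ω : τ(ω) = t or τ̂(ω) = t} ⊆ {ω : b*_-(t) ≤ X_t(ω) ≤ b*(t)}. -/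
open Filter Set Topology

/-!
Let `S` be the hitting set and `t = inf S`. Every `s ∈ (0, t)` misses `S`, so `b s ≤ X_s` there,
and letting `s ↗ t` gives `b*_-(t) ≤ X_t` by continuity. If `X_t > b t`, then `t ∉ S`, so points
of `S` (where `X ≤ b`) accumulate at `t` from the right, and continuity gives
`X_t ≤ limsup_{s→t} b s`.
-/

section LimsupTendsto

variable {α β : Type*} [CompleteLinearOrder β] [TopologicalSpace β] [OrderTopology β]
  {l : Filter α} {f g : α → β} {a : β}

theorem Filter.limsup_le_of_eventually_le_of_tendsto (hgf : ∀ᶠ x in l, g x ≤ f x)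
    (hf : Tendsto f l (𝓝 a)) : limsup g l ≤ a := by
  rcases l.eq_or_neBot with rfl | _
  · simp
  · exact (limsup_le_limsup hgf).trans hf.limsup_eq.le

theorem Filter.le_limsup_of_frequently_le_of_tendsto (hfg : ∃ᶠ x in l, f x ≤ g x)
    (hf : Tendsto f l (𝓝 a)) : a ≤ limsup g l := by
  set l' := l ⊓ 𝓟 {x | f x ≤ g x}
  have : l'.NeBot := frequently_iff_neBot.1 hfg
  have hle : ∀ᶠ x in l', f x ≤ g x := eventually_inf_principal.2 (Eventually.of_forall fun _ => id)
  calc a = liminf f l' := ((hf.mono_left inf_le_left).liminf_eq).symm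
    _ ≤ liminf g l' := liminf_le_liminf hle
    _ ≤ limsup g l' := liminf_le_limsup
    _ ≤ limsup g l := limsup_le_limsup_of_le inf_le_left

end LimsupTendsto

theorem isGLB_of_sInf_image_coe_eq {S : Set ℝ} {t : ℝ}
    (h : sInf ((↑) '' S : Set EReal) = t) : IsGLB S t :=
  IsGLB.of_image EReal.coe_le_coe_iff (h ▸ isGLB_sInf _)

theorem nonempty_of_sInf_image_coe_eq {S : Set ℝ} {t : ℝ}
    (h : sInf ((↑) '' S : Set EReal) = t) : S.Nonempty := by
  rw [← image_nonempty (f := ((↑) : ℝ → EReal))]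
  by_contra hS
  rw [not_nonempty_iff_eq_empty.1 hS, sInf_empty] at h
  exact EReal.top_ne_coe t h

theorem IsGLB.frequently_mem_nhdsWithin_compl {S A : Set ℝ} {t : ℝ} (h : IsGLB S t)
    (hne : S.Nonempty) (htS : t ∉ S) (hSA : S ⊆ A) : ∃ᶠ s in 𝓝[{t}ᶜ ∩ A] t, s ∈ S :=
  frequently_nhdsWithin_iff.2 <| (h.frequently_nhds_mem hne).mono fun _ hs =>
    ⟨hs, ne_of_mem_of_not_mem hs htS, hSA hs⟩

/-- The sandwich `{f < b} ⊆ S ⊆ {f ≤ b}` covers both hitting times `τ` and `τ̂` at once. -/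
theorem limsup_le_and_le_max_limsup_of_sInf_eq {f b : ℝ → ℝ} {t : ℝ} (hf : ContinuousAt f t)
    {S : Set ℝ} (hlt : {s | 0 < s ∧ f s < b s} ⊆ S) (hle : S ⊆ {s | 0 < s ∧ f s ≤ b s})
    (hS : sInf ((↑) '' S : Set EReal) = t) :
    limsup (fun s => (b s : EReal)) (𝓝[Iio t ∩ Ioi 0] t) ≤ (f t : EReal)
    ∧ (f t : EReal) ≤ max (b t : EReal) (limsup (fun s => (b s : EReal)) (𝓝[{t}ᶜ ∩ Ioi 0] t)) := by
  have hglb := isGLB_of_sInf_image_coe_eq hS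
  have hfE : ContinuousAt (fun s => (f s : EReal)) t :=
    continuous_coe_real_ereal.continuousAt.comp hf
  constructor
  · refine limsup_le_of_eventually_le_of_tendsto ?_ (hfE.tendsto.mono_left nhdsWithin_le_nhds)
    filter_upwards [self_mem_nhdsWithin] with s ⟨hst, hs⟩
    have hsS : s ∉ S := fun hsS => (hglb.1 hsS).not_gt hst
    exact EReal.coe_le_coe_iff.2 (not_lt.1 fun hfb => hsS (hlt ⟨hs, hfb⟩))
  · by_cases hbt : f t ≤ b t
    · exact le_max_of_le_left (EReal.coe_le_coe_iff.2 hbt)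
    refine le_max_of_le_right (le_limsup_of_frequently_le_of_tendsto ?_
      (hfE.tendsto.mono_left nhdsWithin_le_nhds))
    have hfreq := hglb.frequently_mem_nhdsWithin_compl (nonempty_of_sInf_image_coe_eq hS)
      (fun htS => hbt (hle htS).2) fun s hs => (hle hs).1
    exact hfreq.mono fun s hs => EReal.coe_le_coe_iff.2 (hle hs).2

theorem stmt8_general {Ω : Type*} (X : ℝ → Ω → ℝ)
    (hcont : ∀ ω : Ω, Continuous fun s : ℝ => X s ω)
    (b : ℝ → ℝ) (t : ℝ) (ω : Ω)
    (h : sInf ((fun s : ℝ => (s : EReal)) '' {s : ℝ | 0 < s ∧ X s ω < b s}) = (t : EReal)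
      ∨ sInf ((fun s : ℝ => (s : EReal)) '' {s : ℝ | 0 < s ∧ X s ω ≤ b s}) = (t : EReal)) :
    Filter.limsup (fun s : ℝ => (b s : EReal))
        (nhdsWithin t (Set.Iio t ∩ Set.Ioi 0)) ≤ (X t ω : EReal)
    ∧ (X t ω : EReal) ≤ max (b t : EReal)
        (Filter.limsup (fun s : ℝ => (b s : EReal))
          (nhdsWithin t ({t}ᶜ ∩ Set.Ioi 0))) := by
  have hsub : {s | 0 < s ∧ X s ω < b s} ⊆ {s | 0 < s ∧ X s ω ≤ b s} :=
    fun _ hs => ⟨hs.1, hs.2.le⟩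
  rcases h with h | h
  · exact limsup_le_and_le_max_limsup_of_sInf_eq (hcont ω).continuousAt subset_rfl hsub h
  · exact limsup_le_and_le_max_limsup_of_sInf_eq (hcont ω).continuousAt hsub subset_rfl h

/-- with `τ = inf{s>0 : X_s < b s}` and `τ̂ = inf{s>0 : X_s ≤ b s}`
(infima in the extended reals), for every `t > 0`,
`{τ = t or τ̂ = t} ⊆ {b*_-(t) ≤ X_t ≤ b*(t)}`, where
`b*(t) = max (b t) (limsup_{s→t} b s)` and `b*_-(t) = limsup_{s↗t} b s`. -/
theorem stmt8 {Ω : Type*} (X : ℝ → Ω → ℝ)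
    (hcont : ∀ ω : Ω, Continuous fun s : ℝ => X s ω)
    (b : ℝ → ℝ) (t : ℝ) (ht : 0 < t) (ω : Ω)
    (h : sInf ((fun s : ℝ => (s : EReal)) '' {s : ℝ | 0 < s ∧ X s ω < b s}) = (t : EReal)
      ∨ sInf ((fun s : ℝ => (s : EReal)) '' {s : ℝ | 0 < s ∧ X s ω ≤ b s}) = (t : EReal)) :
    Filter.limsup (fun s : ℝ => (b s : EReal))
        (nhdsWithin t (Set.Iio t ∩ Set.Ioi 0)) ≤ (X t ω : EReal)
    ∧ (X t ω : EReal) ≤ max (b t : EReal)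
        (Filter.limsup (fun s : ℝ => (b s : EReal))
          (nhdsWithin t ({t}ᶜ ∩ Set.Ioi 0))) :=
  stmt8_general X hcont b t ω h
end

section
/- Let X have continuous paths and let b, b₁, b₂, … : (0,∞) → [-∞,∞) be upper-semi-continuous functions with b₁ ≤ b₂ ≤ b₃ ≤ ⋯ and b(t) = lim_{n→∞} b_n(t) for all t > 0. Let τ = inf{s>0 : X_s < b(s)}, τ_n = inf{s>0 : X_s < b_n(s)}, p(t) = P(τ ≥ t), p_n(t) = P(τ_n ≥ t). Then for every t ≥ 0, p(t) = lim_{n→∞} p_n(t). -/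
/-! Since `bn n s` increases to `b s`, the events `{X ≥ bn n on (0, t)}` decrease to
`{X ≥ b on (0, t)}`; continuity of the finite measure `μ` from above gives the limit. -/

open MeasureTheory Set Filter Topology

section SurvivalSets

variable {ι Ω α : Type*} [Preorder α] {f : ℕ → ι → α} {g : ι → α} {Y : ι → Ω → α} {S : Set ι}

theorem antitone_setOf_forall_le (hf : ∀ s ∈ S, Monotone fun n => f n s) :
    Antitone fun n => {ω | ∀ s ∈ S, f n s ≤ Y s ω} :=
  fun _ _ hnm _ hω s hs => (hf s hs hnm).trans (hω s hs)

theorem iInter_setOf_forall_le_of_tendsto [TopologicalSpace α] [OrderClosedTopology α]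
    (hf : ∀ s ∈ S, Monotone fun n => f n s)
    (hlim : ∀ s ∈ S, Tendsto (fun n => f n s) atTop (𝓝 (g s))) :
    ⋂ n, {ω | ∀ s ∈ S, f n s ≤ Y s ω} = {ω | ∀ s ∈ S, g s ≤ Y s ω} := by
  ext ω
  simp only [mem_iInter, mem_ofPred_eq]
  constructor
  · exact fun h s hs => le_of_tendsto (hlim s hs) (Eventually.of_forall fun n => h n s hs)
  · exact fun h n s hs => ((hf s hs).ge_of_tendsto (hlim s hs) n).trans (h s hs)

end SurvivalSets

theorem stmt12_general {Ω : Type*} [MeasurableSpace Ω] (μ : Measure Ω)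
    [IsProbabilityMeasure μ] (X : ℝ → Ω → ℝ)
    (b : ℝ → EReal) (bn : ℕ → ℝ → EReal)
    (hmono : ∀ (n : ℕ) (t : ℝ), 0 < t → bn n t ≤ bn (n + 1) t)
    (hlim : ∀ t : ℝ, 0 < t →
      Filter.Tendsto (fun n => bn n t) Filter.atTop (nhds (b t)))
    (hmeasn : ∀ (n : ℕ) (t : ℝ),
      MeasurableSet {ω : Ω | ∀ s ∈ Set.Ioo (0 : ℝ) t, bn n s ≤ (X s ω : EReal)}) :
    ∀ t : ℝ, 0 ≤ t →
      Filter.Tendsto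
        (fun n => μ {ω : Ω | ∀ s ∈ Set.Ioo (0 : ℝ) t, bn n s ≤ (X s ω : EReal)})
        Filter.atTop
        (nhds (μ {ω : Ω | ∀ s ∈ Set.Ioo (0 : ℝ) t, b s ≤ (X s ω : EReal)})) := by
  intro t _
  have hmonoS : ∀ s ∈ Ioo (0 : ℝ) t, Monotone fun n => bn n s := fun s hs =>
    monotone_nat_of_le_succ fun n => hmono n s hs.1
  rw [← iInter_setOf_forall_le_of_tendsto hmonoS fun s hs => hlim s hs.1]
  exact tendsto_measure_iInter_atTop (fun n => (hmeasn n t).nullMeasurableSet)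
    (antitone_setOf_forall_le hmonoS) ⟨0, measure_ne_top μ _⟩

/-- for upper-semi-continuous boundaries `b_n ↑ b` pointwise, the
survival probabilities converge: `p(t) = lim_n p_n(t)` for every `t ≥ 0`, where
`p(t) = P(X_s ≥ b(s) ∀ s ∈ (0,t))` and similarly for `p_n`. -/
theorem stmt12 {Ω : Type*} [MeasurableSpace Ω] (μ : Measure Ω)
    [IsProbabilityMeasure μ] (X : ℝ → Ω → ℝ)
    (hcont : ∀ ω : Ω, Continuous fun s : ℝ => X s ω)
    (b : ℝ → EReal) (bn : ℕ → ℝ → EReal)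
    (husc : ∀ t : ℝ, 0 < t →
      Filter.limsup b (nhdsWithin t ({t}ᶜ ∩ Set.Ioi 0)) ≤ b t)
    (huscn : ∀ (n : ℕ) (t : ℝ), 0 < t →
      Filter.limsup (bn n) (nhdsWithin t ({t}ᶜ ∩ Set.Ioi 0)) ≤ bn n t)
    (hmono : ∀ (n : ℕ) (t : ℝ), 0 < t → bn n t ≤ bn (n + 1) t)
    (hlim : ∀ t : ℝ, 0 < t →
      Filter.Tendsto (fun n => bn n t) Filter.atTop (nhds (b t)))
    (hmeasn : ∀ (n : ℕ) (t : ℝ),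
      MeasurableSet {ω : Ω | ∀ s ∈ Set.Ioo (0 : ℝ) t, bn n s ≤ (X s ω : EReal)})
    (hmeas : ∀ t : ℝ,
      MeasurableSet {ω : Ω | ∀ s ∈ Set.Ioo (0 : ℝ) t, b s ≤ (X s ω : EReal)}) :
    ∀ t : ℝ, 0 ≤ t →
      Filter.Tendsto
        (fun n => μ {ω : Ω | ∀ s ∈ Set.Ioo (0 : ℝ) t, bn n s ≤ (X s ω : EReal)})
        Filter.atTop
        (nhds (μ {ω : Ω | ∀ s ∈ Set.Ioo (0 : ℝ) t, b s ≤ (X s ω : EReal)})) :=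
  stmt12_general μ X b bn hmono hlim hmeasn
end

section
/- Let X have continuous paths and b be a boundary such that the survival probability p(t) = P(X_s ≥ b(s) ∀ s ∈ (0,t)) is continuous on [0,∞), and w(x,t) = P(τ ≥ t, X_t > x) with τ = inf{s>0 : X_s < b(s)}. Then for any x ∈ ℝ and t > s > 0: |w(x,t) − w(x,s)| ≤ P(X_s > x ≥ X_t) + P(X_t > x ≥ X_s) + |p(s) − p(t)|. Consequently, if additionally t ↦ X_t is stochastically continuous, then w(x,·) is continuous on (0,∞). -/
open MeasureTheory Set Filter Topology

/-! The survival events `S_t = {X_r ≥ b(r) for r ∈ (0,t)} = {τ ≥ t}` decrease in `t`, so for `s < t`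
`w(x,t) − w(x,s) = P(S_t, X_t > x ≥ X_s) − P(S_t, X_s > x ≥ X_t) − P(S_s \ S_t, X_s > x)`,
and the last term is at most `P(S_s \ S_t) = p(s) − p(t)`. If `X_s → X_t` in probability, each
crossing probability `P(X_s > x ≥ X_t)` is at most `P(|X_s − X_t| ≥ η) + P(x − η < X_t ≤ x)`,
and the second term tends to `P(X_t = x) = 0` as `η → 0`. -/

section NestedEvents

variable {Ω : Type*} [MeasurableSpace Ω] {μ : Measure Ω}

theorem abs_measureReal_inter_sub_le_of_subset [IsFiniteMeasure μ] {A A' C C' : Set Ω}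
    (hA'A : A' ⊆ A) (hA' : MeasurableSet A') :
    |μ.real (A' ∩ C') - μ.real (A ∩ C)|
      ≤ μ.real (C \ C') + μ.real (C' \ C) + (μ.real A - μ.real A') := by
  have hup : μ.real (A' ∩ C') ≤ μ.real (A ∩ C) + μ.real (C' \ C) := by
    have hsub : A' ∩ C' ⊆ A ∩ C ∪ C' \ C := fun ω ⟨hωA', hωC'⟩ =>
      (em (ω ∈ C)).imp (fun hωC => ⟨hA'A hωA', hωC⟩) (fun hωC => ⟨hωC', hωC⟩)
    exact (measureReal_mono hsub).trans (measureReal_union_le _ _)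
  have hdown : μ.real (A ∩ C) ≤ μ.real (A' ∩ C') + μ.real (C \ C') + μ.real (A \ A') := by
    have hsub : A ∩ C ⊆ (A' ∩ C' ∪ C \ C') ∪ A \ A' := by
      rintro ω ⟨hωA, hωC⟩
      by_cases hωA' : ω ∈ A'
      · by_cases hωC' : ω ∈ C'
        exacts [Or.inl (Or.inl ⟨hωA', hωC'⟩), Or.inl (Or.inr ⟨hωC, hωC'⟩)]
      · exact Or.inr ⟨hωA, hωA'⟩
    calc μ.real (A ∩ C) ≤ μ.real ((A' ∩ C' ∪ C \ C') ∪ A \ A') := measureReal_mono hsub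
      _ ≤ μ.real (A' ∩ C' ∪ C \ C') + μ.real (A \ A') := measureReal_union_le _ _
      _ ≤ _ := by gcongr; exact measureReal_union_le _ _
  rw [measureReal_sdiff hA'A hA'] at hdown
  have h₁ := measureReal_nonneg (μ := μ) (s := C \ C')
  have h₂ := measureReal_nonneg (μ := μ) (s := C' \ C)
  have h₃ : μ.real A' ≤ μ.real A := measureReal_mono hA'A
  rw [abs_sub_le_iff]
  constructor <;> linarith

theorem abs_measureReal_inter_sub_le_of_nested [IsFiniteMeasure μ] {A A' C C' : Set Ω}
    (hnested : A' ⊆ A ∨ A ⊆ A') (hA : MeasurableSet A) (hA' : MeasurableSet A') :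
    |μ.real (A' ∩ C') - μ.real (A ∩ C)|
      ≤ μ.real (C \ C') + μ.real (C' \ C) + |μ.real A - μ.real A'| := by
  rcases hnested with h | h
  · have := abs_measureReal_inter_sub_le_of_subset (μ := μ) (C := C) (C' := C') h hA'
    linarith [le_abs_self (μ.real A - μ.real A')]
  · have := abs_measureReal_inter_sub_le_of_subset (μ := μ) (C := C') (C' := C) h hA
    rw [abs_sub_comm] at this
    linarith [neg_abs_le (μ.real A - μ.real A')]

end NestedEvents

section ConvergenceInMeasure

variable {Ω ι : Type*} [MeasurableSpace Ω] {μ : Measure Ω} {l : Filter ι}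
  {Y : ι → Ω → ℝ} {Z : Ω → ℝ}

theorem MeasureTheory.TendstoInMeasure.tendsto_measure_of_subset_union
    (hY : TendstoInMeasure μ Y l Z) {E : ℝ → Set Ω}
    (hE : Tendsto (fun η => μ (E η)) (𝓝[>] 0) (𝓝 0)) {F : ι → Set Ω}
    (hF : ∀ i, ∀ η > 0, F i ⊆ {ω | η ≤ dist (Y i ω) (Z ω)} ∪ E η) :
    Tendsto (fun i => μ (F i)) l (𝓝 0) := by
  rw [ENNReal.tendsto_nhds_zero]
  intro δ hδ
  obtain ⟨η, hEη, hη⟩ := ((hE.eventually (eventually_le_nhds (ENNReal.half_pos hδ.ne'))).and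
    self_mem_nhdsWithin).exists
  filter_upwards [ENNReal.tendsto_nhds_zero.1 (tendstoInMeasure_iff_dist.1 hY η hη) (δ / 2)
    (ENNReal.half_pos hδ.ne')] with i hi
  calc μ (F i) ≤ μ {ω | η ≤ dist (Y i ω) (Z ω)} + μ (E η) :=
        (measure_mono (hF i η hη)).trans (measure_union_le _ _)
    _ ≤ δ / 2 + δ / 2 := add_le_add hi hEη
    _ = δ := ENNReal.add_halves δ

theorem MeasureTheory.TendstoInMeasure.tendsto_measure_lt_and_limit_le [IsFiniteMeasure μ]
    (hY : TendstoInMeasure μ Y l Z) (hZ : Measurable Z) {x : ℝ}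
    (hx : μ {ω | Z ω = x} = 0) :
    Tendsto (fun i => μ {ω | x < Y i ω ∧ Z ω ≤ x}) l (𝓝 0) := by
  refine hY.tendsto_measure_of_subset_union (E := fun η => Z ⁻¹' Ioc (x - η) x) ?_ ?_
  · have hInter : ⋂ η > 0, Z ⁻¹' Ioc (x - η) x = {ω | Z ω = x} := by
      ext ω
      simp only [mem_iInter, mem_preimage, mem_Ioc, mem_ofPred_eq]
      refine ⟨fun h => le_antisymm (h 1 one_pos).2 ?_, fun h η hη => ⟨by linarith, h.le⟩⟩
      by_contra! hlt
      linarith [(h (x - Z ω) (by linarith)).1]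
    have := tendsto_measure_biInter_gt (μ := μ) (a := 0)
      (s := fun η => Z ⁻¹' Ioc (x - η) x) (fun _ _ => (hZ measurableSet_Ioc).nullMeasurableSet)
      (fun η η' _ hηη' => preimage_mono (Ioc_subset_Ioc_left (by linarith)))
      ⟨1, one_pos, measure_ne_top _ _⟩
    rwa [hInter, hx] at this
  · rintro i η - ω ⟨hYx, hZx⟩
    by_cases hfar : η ≤ dist (Y i ω) (Z ω)
    · exact Or.inl hfar
    · rw [not_le, Real.dist_eq, abs_lt] at hfar
      exact Or.inr ⟨by linarith, hZx⟩

theorem MeasureTheory.TendstoInMeasure.tendsto_measure_le_and_limit_lt [IsFiniteMeasure μ]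
    (hY : TendstoInMeasure μ Y l Z) (hZ : Measurable Z) (x : ℝ) :
    Tendsto (fun i => μ {ω | x < Z ω ∧ Y i ω ≤ x}) l (𝓝 0) := by
  refine hY.tendsto_measure_of_subset_union (E := fun η => Z ⁻¹' Ioo x (x + η)) ?_ ?_
  · have hInter : ⋂ η > 0, Z ⁻¹' Ioo x (x + η) = ∅ := by
      refine eq_empty_of_forall_notMem fun ω h => ?_
      simp only [mem_iInter, mem_preimage, mem_Ioo] at h
      linarith [(h (Z ω - x) (by linarith [(h 1 one_pos).1])).2]
    have := tendsto_measure_biInter_gt (μ := μ) (a := 0)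
      (s := fun η => Z ⁻¹' Ioo x (x + η)) (fun _ _ => (hZ measurableSet_Ioo).nullMeasurableSet)
      (fun η η' _ hηη' => preimage_mono (Ioo_subset_Ioo_right (by linarith)))
      ⟨1, one_pos, measure_ne_top _ _⟩
    rwa [hInter, measure_empty] at this
  · rintro i η - ω ⟨hZx, hYx⟩
    by_cases hfar : η ≤ dist (Y i ω) (Z ω)
    · exact Or.inl hfar
    · rw [not_le, Real.dist_eq, abs_lt] at hfar
      exact Or.inr ⟨hZx, by linarith⟩

end ConvergenceInMeasure

section Survival

variable {Ω : Type*} {X : ℝ → Ω → ℝ} {b : ℝ → ℝ}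

def survivalEvent (X : ℝ → Ω → ℝ) (b : ℝ → ℝ) (t : ℝ) : Set Ω :=
  {ω | ∀ s ∈ Ioo 0 t, b s ≤ X s ω}

theorem survivalEvent_antitone : Antitone (survivalEvent X b) :=
  fun _ _ hst _ hω r hr => hω r ⟨hr.1, hr.2.trans_le hst⟩

variable [MeasurableSpace Ω] {μ : Measure Ω}

theorem abs_measureReal_survivalEvent_inter_sub_le [IsFiniteMeasure μ]
    (hmeas : ∀ t, MeasurableSet (survivalEvent X b t)) (x s t : ℝ) :
    |μ.real (survivalEvent X b t ∩ {ω | x < X t ω})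
        - μ.real (survivalEvent X b s ∩ {ω | x < X s ω})|
      ≤ μ.real {ω | x < X s ω ∧ X t ω ≤ x} + μ.real {ω | x < X t ω ∧ X s ω ≤ x}
        + |μ.real (survivalEvent X b s) - μ.real (survivalEvent X b t)| := by
  have hcross : ∀ u v, {ω | x < X u ω} \ {ω | x < X v ω} = {ω | x < X u ω ∧ X v ω ≤ x} :=
    fun u v => by ext ω; simp [not_lt]
  rw [← hcross s t, ← hcross t s]
  exact abs_measureReal_inter_sub_le_of_nested
    ((le_total s t).imp (fun h => survivalEvent_antitone h) (fun h => survivalEvent_antitone h))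
    (hmeas s) (hmeas t)

theorem continuousAt_measureReal_survivalEvent_inter [IsFiniteMeasure μ]
    (hX : ∀ t, Measurable (X t)) (hmeas : ∀ t, MeasurableSet (survivalEvent X b t)) {x t : ℝ}
    (hXt : TendstoInMeasure μ X (𝓝 t) (X t)) (hatom : μ {ω | X t ω = x} = 0)
    (hsurv : ContinuousAt (fun s => μ.real (survivalEvent X b s)) t) :
    ContinuousAt (fun s => μ.real (survivalEvent X b s ∩ {ω | x < X s ω})) t := by
  have hup := (ENNReal.tendsto_toReal_zero_iff (fun _ => measure_ne_top _ _)).2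
    (hXt.tendsto_measure_le_and_limit_lt (hX t) x)
  have hdown := (ENNReal.tendsto_toReal_zero_iff (fun _ => measure_ne_top _ _)).2
    (hXt.tendsto_measure_lt_and_limit_le (hX t) hatom)
  have hp := tendsto_iff_dist_tendsto_zero.1 hsurv
  rw [ContinuousAt, tendsto_iff_dist_tendsto_zero]
  refine squeeze_zero (fun _ => dist_nonneg) (fun s => ?_)
    (by simpa only [add_zero] using (hup.add hdown).add hp)
  have := abs_measureReal_survivalEvent_inter_sub_le (μ := μ) hmeas x t s
  rw [abs_sub_comm (μ.real (survivalEvent X b t))] at this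
  exact this

end Survival

theorem stmt16_general {Ω : Type*} [MeasurableSpace Ω] (μ : Measure Ω)
    [IsProbabilityMeasure μ] (X : ℝ → Ω → ℝ)
    (hX : ∀ t : ℝ, Measurable (X t))
    (b : ℝ → ℝ) (x : ℝ) (w : ℝ → ℝ → ℝ) (p : ℝ → ℝ)
    (hw : ∀ y t : ℝ, w y t
      = (μ {ω : Ω | (∀ s ∈ Set.Ioo (0 : ℝ) t, b s ≤ X s ω) ∧ y < X t ω}).toReal)
    (hp : ∀ t : ℝ, p t = (μ {ω : Ω | ∀ s ∈ Set.Ioo (0 : ℝ) t, b s ≤ X s ω}).toReal)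
    (hmeas : ∀ t : ℝ, MeasurableSet {ω : Ω | ∀ s ∈ Set.Ioo (0 : ℝ) t, b s ≤ X s ω})
    (hpcont : ContinuousOn p (Set.Ici 0)) :
    (∀ s t : ℝ, 0 < s → s < t →
      |w x t - w x s| ≤ (μ {ω : Ω | x < X s ω ∧ X t ω ≤ x}).toReal
        + (μ {ω : Ω | x < X t ω ∧ X s ω ≤ x}).toReal + |p s - p t|)
    ∧ ((∀ t : ℝ, 0 < t → ∀ ε : ℝ, 0 < ε →
          Filter.Tendsto (fun s : ℝ => μ {ω : Ω | ε ≤ |X s ω - X t ω|})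
            (nhds t) (nhds 0)) →
        (∀ t : ℝ, 0 < t → μ {ω : Ω | X t ω = x} = 0) →
        ContinuousOn (fun t => w x t) (Set.Ioi 0)) := by
  have hw' : ∀ t, w x t = μ.real (survivalEvent X b t ∩ {ω | x < X t ω}) := hw x
  refine ⟨fun s t _ _ => ?_, fun hSC hatom t ht => ?_⟩
  · rw [hw', hw', hp, hp]
    exact abs_measureReal_survivalEvent_inter_sub_le hmeas x s t
  · have hXt : TendstoInMeasure μ X (𝓝 t) (X t) := tendstoInMeasure_iff_dist.2
      fun ε hε => by simpa only [Real.dist_eq] using hSC t ht ε hε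
    have hsurv : ContinuousAt (fun s => μ.real (survivalEvent X b s)) t :=
      (hpcont.continuousAt (Ici_mem_nhds ht)).congr (.of_forall hp)
    exact ((continuousAt_measureReal_survivalEvent_inter hX hmeas hXt (hatom t ht) hsurv).congr
      (.of_forall fun s => (hw' s).symm)).continuousWithinAt

/-- with `w(x,t) = P(X_s ≥ b(s) ∀ s ∈ (0,t), X_t > x)` and
`p(t) = P(X_s ≥ b(s) ∀ s ∈ (0,t))` continuous on `[0,∞)`, for `t > s > 0`:
`|w(x,t) − w(x,s)| ≤ P(X_s > x ≥ X_t) + P(X_t > x ≥ X_s) + |p(s) − p(t)|`.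
Consequently, if `X` is stochastically continuous (and `P(X_t = x) = 0`),
then `w(x,·)` is continuous on `(0,∞)`. -/
theorem stmt16 {Ω : Type*} [MeasurableSpace Ω] (μ : Measure Ω)
    [IsProbabilityMeasure μ] (X : ℝ → Ω → ℝ)
    (hcont : ∀ ω : Ω, Continuous fun s : ℝ => X s ω)
    (hX : ∀ t : ℝ, Measurable (X t))
    (b : ℝ → ℝ) (x : ℝ) (w : ℝ → ℝ → ℝ) (p : ℝ → ℝ)
    (hw : ∀ y t : ℝ, w y t
      = (μ {ω : Ω | (∀ s ∈ Set.Ioo (0 : ℝ) t, b s ≤ X s ω) ∧ y < X t ω}).toReal)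
    (hp : ∀ t : ℝ, p t = (μ {ω : Ω | ∀ s ∈ Set.Ioo (0 : ℝ) t, b s ≤ X s ω}).toReal)
    (hmeas : ∀ t : ℝ, MeasurableSet {ω : Ω | ∀ s ∈ Set.Ioo (0 : ℝ) t, b s ≤ X s ω})
    (hpcont : ContinuousOn p (Set.Ici 0)) :
    (∀ s t : ℝ, 0 < s → s < t →
      |w x t - w x s| ≤ (μ {ω : Ω | x < X s ω ∧ X t ω ≤ x}).toReal
        + (μ {ω : Ω | x < X t ω ∧ X s ω ≤ x}).toReal + |p s - p t|)
    ∧ ((∀ t : ℝ, 0 < t → ∀ ε : ℝ, 0 < ε →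
          Filter.Tendsto (fun s : ℝ => μ {ω : Ω | ε ≤ |X s ω - X t ω|})
            (nhds t) (nhds 0)) →
        (∀ t : ℝ, 0 < t → μ {ω : Ω | X t ω = x} = 0) →
        ContinuousOn (fun t => w x t) (Set.Ioi 0)) :=
  stmt16_general μ X hX b x w p hw hp hmeas hpcont
end
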